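/- In an implicative aBE algebra, for all x, y, z: (((x → y) → z) → y) → (x → y) = 1. -/

import Mathlib

class ImplicativeABE (X : Type*) where
  imp : X → X → X
  one : X
  one_imp : ∀ x, imp one x = x
  imp_one : ∀ x, imp x one = one
  imp_self : ∀ x, imp x x = one
  exch : ∀ x y z, imp x (imp y z) = imp y (imp x z)
  antisymm : ∀ x y, imp x y = one → imp y x = one → x = y
  implicative : ∀ x y, imp (imp x y) x = x

infixr:60 " ⮕ " => ImplicativeABE.imp
notation "𝟙" => ImplicativeABE.one

namespace ImplicativeABE

variable {X : Type*} [ImplicativeABE X]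

theorem imp_imp_self_eq_one (x y : X) : x ⮕ (y ⮕ x) = 𝟙 := by
  rw [exch, imp_self, imp_one]

theorem imp_imp_imp_imp_eq_imp (x y z : X) : x ⮕ (((x ⮕ y) ⮕ z) ⮕ y) = x ⮕ y := by
  rw [exch, implicative]

end ImplicativeABE

theorem stmt4 {X : Type*} [ImplicativeABE X] (x y z : X) :
    (((x ⮕ y) ⮕ z) ⮕ y) ⮕ (x ⮕ y) = 𝟙 := by
  simpa only [ImplicativeABE.imp_imp_imp_imp_eq_imp] using
    ImplicativeABE.imp_imp_self_eq_one (((x ⮕ y) ⮕ z) ⮕ y) x
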